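/- arXiv:1506.01872 — 2 statements merged into one kernel-verified Lean document; each statement's English description precedes it below -/
import Mathlib

section
/- The translation t' from ML-formulas to LEA-formulas defined by t'(p)=p, t'(¬φ)=¬t'(φ), t'(φ∧ψ)=t'(φ)∧t'(ψ), and t'(□φ)=(∘t'(φ) ∧ t'(φ)) is truth-preserving on reflexive models: for every ML-formula φ, every reflexive model M, and every world s of M, M,s ⊨ φ if and only if M,s ⊨ t'(φ). Hence LEA and ML are equally expressive on the class of reflexive models. -/
/-- The language LEA of essence and accident. -/
inductive LEAForm : Type
  | atom : ℕ → LEAForm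
  | neg : LEAForm → LEAForm
  | and : LEAForm → LEAForm → LEAForm
  | ess : LEAForm → LEAForm

/-- The language ML of modal logic. -/
inductive MLForm : Type
  | atom : ℕ → MLForm
  | neg : MLForm → MLForm
  | and : MLForm → MLForm → MLForm
  | box : MLForm → MLForm

/-- A Kripke model. -/
structure Model (W : Type) where
  R : W → W → Prop
  V : ℕ → W → Prop

/-- Satisfaction for LEA. -/
def satLEA {W : Type} (M : Model W) : W → LEAForm → Prop
  | w, .atom p => M.V p w
  | w, .neg φ => ¬ satLEA M w φ
  | w, .and φ ψ => satLEA M w φ ∧ satLEA M w ψ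
  | w, .ess φ => satLEA M w φ → ∀ v, M.R w v → satLEA M v φ

/-- Satisfaction for ML. -/
def satML {W : Type} (M : Model W) : W → MLForm → Prop
  | w, .atom p => M.V p w
  | w, .neg φ => ¬ satML M w φ
  | w, .and φ ψ => satML M w φ ∧ satML M w ψ
  | w, .box φ => ∀ v, M.R w v → satML M v φ

/-- ML is at least as expressive as LEA on the class C of models. -/
def LEAtoML (C : ∀ W : Type, Model W → Prop) : Prop :=
  ∀ φ : LEAForm, ∃ ψ : MLForm, ∀ (W : Type) [Nonempty W] (M : Model W), C W M →
    ∀ s : W, satLEA M s φ ↔ satML M s ψ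

/-- LEA is at least as expressive as ML on the class C of models. -/
def MLtoLEA (C : ∀ W : Type, Model W → Prop) : Prop :=
  ∀ ψ : MLForm, ∃ φ : LEAForm, ∀ (W : Type) [Nonempty W] (M : Model W), C W M →
    ∀ s : W, satLEA M s φ ↔ satML M s ψ

/-- LEA is less expressive than ML on the class C of models. -/
def LEAlessExp (C : ∀ W : Type, Model W → Prop) : Prop :=
  LEAtoML C ∧ ¬ MLtoLEA C

/-- The translation t' from ML to LEA with t'(□φ) = (∘t'(φ) ∧ t'(φ)). -/
def tr' : MLForm → LEAForm
  | .atom p => .atom p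
  | .neg φ => .neg (tr' φ)
  | .and φ ψ => .and (tr' φ) (tr' ψ)
  | .box φ => .and (.ess (tr' φ)) (tr' φ)

/-- The class of reflexive models. -/
def reflC (W : Type) (M : Model W) : Prop := ∀ w, M.R w w


def trLM : LEAForm → MLForm
  | .atom p => .atom p
  | .neg φ => .neg (trLM φ)
  | .and φ ψ => .and (trLM φ) (trLM ψ)
  | .ess φ => .neg (.and (trLM φ) (.neg (.box (trLM φ))))

lemma trLM_sound {W : Type} (M : Model W) (φ : LEAForm) (s : W) :
    satLEA M s φ ↔ satML M s (trLM φ) := by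
  induction φ generalizing s with
  | atom p => rfl
  | neg φ ih => simp [satLEA, satML, trLM, ih]
  | and φ ψ ih1 ih2 => simp [satLEA, satML, trLM, ih1, ih2]
  | ess φ ih => simp [satLEA, satML, trLM, ih]

lemma tr'_sound {W : Type} (M : Model W) (hr : reflC W M) (φ : MLForm) (s : W) :
    satML M s φ ↔ satLEA M s (tr' φ) := by
  induction φ generalizing s with
  | atom p => rfl
  | neg φ ih => simp [satLEA, satML, tr', ih]
  | and φ ψ ih1 ih2 => simp [satLEA, satML, tr', ih1, ih2]
  | box φ ih =>
    simp only [satLEA, satML, tr']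
    constructor
    · intro h
      refine ⟨fun _ v hv => (ih v).1 (h v hv), (ih s).1 (h s (hr s))⟩
    · rintro ⟨h1, h2⟩ v hv
      exact (ih v).2 (h1 h2 v hv)

/-- t' is truth-preserving on reflexive models; hence LEA and ML are equally
expressive on the class of reflexive models. -/
theorem stmt4 :
    (∀ (φ : MLForm) (W : Type) [Nonempty W] (M : Model W), reflC W M →
        ∀ s : W, satML M s φ ↔ satLEA M s (tr' φ)) ∧
    LEAtoML reflC ∧ MLtoLEA reflC := by
  refine ⟨fun φ W _ M hr s => tr'_sound M hr φ s, ?_, ?_⟩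
  · intro φ
    exact ⟨trLM φ, fun W _ M _ s => trLM_sound M φ s⟩
  · intro ψ
    exact ⟨tr' ψ, fun W _ M hr s => (tr'_sound M hr ψ s).symm⟩
end

section
/- If M and M' are LEA-saturated models, s a world of M and s' a world of M', then (M,s) and (M',s') satisfy the same LEA-formulas if and only if (M,s) and (M',s') are ∘-bisimilar. -/
def isCircBisim {W : Type} (M : Model W) (Z : W → W → Prop) : Prop :=
  (∃ a b, Z a b) ∧
  ∀ s s', Z s s' →
    ((∀ p, M.V p s ↔ M.V p s') ∧
     (∀ t, M.R s t → ¬ Z s t → ∃ t', M.R s' t' ∧ Z t t') ∧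
     (∀ t', M.R s' t' → ¬ Z s' t' → ∃ t, M.R s t ∧ Z t t'))

/-- The disjoint union of two models. -/
def dsum {W W' : Type} (M : Model W) (M' : Model W') : Model (W ⊕ W') where
  R x y :=
    match x, y with
    | Sum.inl a, Sum.inl b => M.R a b
    | Sum.inr a, Sum.inr b => M'.R a b
    | _, _ => False
  V p x :=
    match x with
    | Sum.inl a => M.V p a
    | Sum.inr a => M'.V p a

/-- (M,s) and (M',s') are ∘-bisimilar: some ∘-bisimulation on the disjoint
union of M and M' relates s to s'. -/
def circBisimilar {W W' : Type} (M : Model W) (s : W) (M' : Model W') (s' : W') : Prop :=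
  ∃ Z, isCircBisim (dsum M M') Z ∧ Z (Sum.inl s) (Sum.inr s')
/-- M is LEA-saturated: for every world s and set Γ of LEA-formulas, if every
finite subset of Γ is satisfied at some successor of s, then Γ itself is
satisfied at some successor of s. -/
def LEASaturated {W : Type} (M : Model W) : Prop :=
  ∀ (s : W) (Γ : Set LEAForm),
    (∀ Δ : Finset LEAForm, ↑Δ ⊆ Γ → ∃ t, M.R s t ∧ ∀ φ ∈ Δ, satLEA M t φ) →
    ∃ t, M.R s t ∧ ∀ φ ∈ Γ, satLEA M t φ

private def LTrue : LEAForm := .neg (.and (.atom 0) (.neg (.atom 0)))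

private lemma sat_LTrue {W : Type} (M : Model W) (w : W) : satLEA M w LTrue := by
  simp only [LTrue, satLEA]; tauto

private def bigand (l : List LEAForm) : LEAForm := l.foldr .and LTrue

private lemma sat_bigand {W : Type} (M : Model W) (w : W) (l : List LEAForm) :
    satLEA M w (bigand l) ↔ ∀ φ ∈ l, satLEA M w φ := by
  induction l with
  | nil => simp [bigand, satLEA, sat_LTrue]
  | cons a l ih => simp [bigand, satLEA] at *; tauto

private lemma sat_inl {W W' : Type} (M : Model W) (M' : Model W') (φ : LEAForm) :
    ∀ w, satLEA (dsum M M') (Sum.inl w) φ ↔ satLEA M w φ := by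
  induction φ with
  | atom p => intro w; simp [satLEA, dsum]
  | neg φ ih => intro w; simp [satLEA, ih]
  | and φ ψ ih1 ih2 => intro w; simp [satLEA, ih1, ih2]
  | ess φ ih =>
    intro w
    simp only [satLEA, ih]
    constructor
    · intro h hw v hv; exact (ih v).1 (h hw (Sum.inl v) hv)
    · intro h hw v hv
      cases v with
      | inl u => exact (ih u).2 (h hw u hv)
      | inr u => exact absurd hv (by simp [dsum])

private lemma sat_inr {W W' : Type} (M : Model W) (M' : Model W') (φ : LEAForm) :
    ∀ w, satLEA (dsum M M') (Sum.inr w) φ ↔ satLEA M' w φ := by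
  induction φ with
  | atom p => intro w; simp [satLEA, dsum]
  | neg φ ih => intro w; simp [satLEA, ih]
  | and φ ψ ih1 ih2 => intro w; simp [satLEA, ih1, ih2]
  | ess φ ih =>
    intro w
    simp only [satLEA, ih]
    constructor
    · intro h hw v hv; exact (ih v).1 (h hw (Sum.inr v) hv)
    · intro h hw v hv
      cases v with
      | inl u => exact absurd hv (by simp [dsum])
      | inr u => exact (ih u).2 (h hw u hv)

private lemma bisim_equiv {W : Type} (N : Model W) (Z : W → W → Prop)
    (h : isCircBisim N Z) (φ : LEAForm) :
    ∀ x y, Z x y → (satLEA N x φ ↔ satLEA N y φ) := by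
  induction φ with
  | atom p => intro x y hxy; exact (h.2 x y hxy).1 p
  | neg φ ih => intro x y hxy; simp [satLEA, ih x y hxy]
  | and φ ψ ih1 ih2 => intro x y hxy; simp [satLEA, ih1 x y hxy, ih2 x y hxy]
  | ess φ ih =>
    intro x y hxy
    obtain ⟨-, hforth, hback⟩ := h.2 x y hxy
    simp only [satLEA]
    constructor
    · intro hx hy t' hRt'
      by_cases hZ : Z y t'
      · exact (ih y t' hZ).1 hy
      · obtain ⟨t, hRt, hZt⟩ := hback t' hRt' hZ
        exact (ih t t' hZt).1 (hx ((ih x y hxy).2 hy) t hRt)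
    · intro hy hx t hRt
      by_cases hZ : Z x t
      · exact (ih x t hZ).1 hx
      · obtain ⟨t', hRt', hZt⟩ := hforth t hRt hZ
        exact (ih t t' hZt).2 (hy ((ih x y hxy).1 hx) t' hRt')

private lemma dsum_saturated {W W' : Type} {M : Model W} {M' : Model W'}
    (hM : LEASaturated M) (hM' : LEASaturated M') : LEASaturated (dsum M M') := by
  intro s Γ hfin
  cases s with
  | inl a =>
    obtain ⟨t, hR, hsat⟩ := hM a Γ (by
      intro Δ hΔ
      obtain ⟨t, hR, hsat⟩ := hfin Δ hΔ
      cases t with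
      | inl b => exact ⟨b, hR, fun φ hφ => (sat_inl M M' φ b).1 (hsat φ hφ)⟩
      | inr b => exact absurd hR (by simp [dsum]))
    exact ⟨Sum.inl t, hR, fun φ hφ => (sat_inl M M' φ t).2 (hsat φ hφ)⟩
  | inr a =>
    obtain ⟨t, hR, hsat⟩ := hM' a Γ (by
      intro Δ hΔ
      obtain ⟨t, hR, hsat⟩ := hfin Δ hΔ
      cases t with
      | inl b => exact absurd hR (by simp [dsum])
      | inr b => exact ⟨b, hR, fun φ hφ => (sat_inr M M' φ b).1 (hsat φ hφ)⟩)
    exact ⟨Sum.inr t, hR, fun φ hφ => (sat_inr M M' φ t).2 (hsat φ hφ)⟩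

/-- The Hennessy–Milner forth step. -/
private lemma forth_step {W : Type} (N : Model W) (hN : LEASaturated N) (s s' t : W)
    (hss : ∀ φ, satLEA N s φ ↔ satLEA N s' φ)
    (hRt : N.R s t) (hst : ¬ ∀ φ, satLEA N s φ ↔ satLEA N t φ) :
    ∃ t', N.R s' t' ∧ ∀ φ, satLEA N t φ ↔ satLEA N t' φ := by
  obtain ⟨χ, htχ, hsχ⟩ : ∃ χ, satLEA N t χ ∧ ¬ satLEA N s χ := by
    push_neg at hst
    obtain ⟨φ₀, hφ₀⟩ := hst
    rcases hφ₀ with ⟨h1, h2⟩ | ⟨h1, h2⟩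
    · exact ⟨.neg φ₀, h2, by simp [satLEA, h1]⟩
    · exact ⟨φ₀, h2, h1⟩
  obtain ⟨t', hRt', hsat⟩ := hN s' {φ | satLEA N t φ} (by
    intro Δ hΔ
    set ψ : LEAForm := .and χ (bigand Δ.toList) with hψ
    have htψ : satLEA N t ψ := by
      simp only [hψ, satLEA, sat_bigand]
      exact ⟨htχ, fun φ hφ => hΔ (by simpa using hφ)⟩
    have hsψ : ¬ satLEA N s ψ := fun h => hsχ h.1
    have hsess : ¬ satLEA N s (.ess (.neg ψ)) := by
      intro h
      have := h hsψ t hRt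
      exact this htψ
    have hs'ess : ¬ satLEA N s' (.ess (.neg ψ)) := fun h => hsess ((hss _).2 h)
    simp only [satLEA, not_forall] at hs'ess
    push_neg at hs'ess
    obtain ⟨-, v, hRv, hvψ⟩ := hs'ess
    refine ⟨v, hRv, fun φ hφ => ?_⟩
    exact (sat_bigand N v Δ.toList).1 hvψ.2 φ (by simpa using hφ)
    )
  refine ⟨t', hRt', fun φ => ⟨fun h => hsat φ h, fun h => ?_⟩⟩
  by_contra ht
  exact (hsat (.neg φ) ht) h


/-- On LEA-saturated models, ∘-equivalence coincides with ∘-bisimilarity. -/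
theorem stmt14 (W W' : Type) [Nonempty W] [Nonempty W']
    (M : Model W) (M' : Model W')
    (hM : LEASaturated M) (hM' : LEASaturated M')
    (s : W) (s' : W') :
    (∀ φ : LEAForm, satLEA M s φ ↔ satLEA M' s' φ) ↔ circBisimilar M s M' s' := by
  constructor
  · intro heq
    set N := dsum M M' with hN
    have hNsat : LEASaturated N := dsum_saturated hM hM'
    set Z : (W ⊕ W') → (W ⊕ W') → Prop :=
      fun x y => ∀ φ, satLEA N x φ ↔ satLEA N y φ with hZdef
    have hZss : Z (Sum.inl s) (Sum.inr s') := fun φ => by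
      rw [sat_inl, sat_inr]; exact heq φ
    refine ⟨Z, ⟨⟨_, _, hZss⟩, ?_⟩, hZss⟩
    intro x y hxy
    refine ⟨fun p => hxy (.atom p), ?_, ?_⟩
    · intro t hRt hZt
      exact forth_step N hNsat x y t hxy hRt hZt
    · intro t' hRt' hZt'
      obtain ⟨t, hRt, ht⟩ := forth_step N hNsat y x t'
        (fun φ => (hxy φ).symm) hRt' hZt'
      exact ⟨t, hRt, fun φ => (ht φ).symm⟩
  · rintro ⟨Z, hZ, hss⟩ φ
    rw [← sat_inl M M' φ s, ← sat_inr M M' φ s']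
    exact bisim_equiv _ Z hZ φ _ _ hss
end
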